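/- arXiv:2112.04205 — 3 statements merged into one kernel-verified Lean document; each statement's English description precedes it below -/
import Mathlib

section
/- Let M be a finitely generated, sharp, integral commutative monoid (written additively). Then there exists a monoid homomorphism f : M → ℕ such that f(m) > 0 for all m ≠ 0. -/
/-!
Pass to the rational vector space `V = ℚ ⊗ G`, where `G` is the Grothendieck group of `M`. The
kernel of `M → V` consists of torsion elements, and a cancellative sharp monoid has no nonzero
torsion, so clearing denominators shows that the images of the nonzero generators admit no
nontrivial nonnegative rational relation. By Gordan's theorem (Fourier–Motzkin elimination of one
coordinate at a time) some linear functional on `V` is positive on all of them; a positive multiple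
of it is `ℕ`-valued on `M`, and it vanishes only at `0` since it does so on the generators.
-/

open Finset Matrix TensorProduct

theorem exists_forall_mul_add_pos {F ι : Type*} [Field F] [LinearOrder F] [IsStrictOrderedRing F]
    [Fintype ι] (a b : ι → F) (hzero : ∀ i, a i = 0 → 0 < b i)
    (hpair : ∀ p q, 0 < a p → a q < 0 → 0 < a p * b q - a q * b p) :
    ∃ t, ∀ i, 0 < a i * t + b i := by
  obtain ⟨t, hlow, hupp⟩ := Finset.exists_between'
    ((univ.filter (0 < a ·)).image fun p => -b p / a p)
    ((univ.filter (a · < 0)).image fun q => -b q / a q) <| by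
      simp only [mem_image, mem_filter, mem_univ, true_and]
      rintro _ ⟨p, hp, rfl⟩ _ ⟨q, hq, rfl⟩
      rw [← neg_div_neg_eq (-b q), neg_neg, div_lt_div_iff₀ hp (neg_pos.2 hq)]
      linarith [hpair p q hp hq]
  refine ⟨t, fun i => ?_⟩
  rcases lt_trichotomy (a i) 0 with hi | hi | hi
  · have := hupp _ (mem_image_of_mem _ (mem_filter.2 ⟨mem_univ i, hi⟩))
    rw [lt_div_iff_of_neg hi] at this
    linarith
  · simpa [hi] using hzero i hi
  · have := hlow _ (mem_image_of_mem _ (mem_filter.2 ⟨mem_univ i, hi⟩))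
    rw [div_lt_iff₀ hi] at this
    linarith

theorem Fintype.linearCombination_vecCons {R ι : Type*} [Semiring R] [Fintype ι] {k : ℕ}
    (a : ι → R) (u : ι → Fin k → R) (c : ι → R) :
    Fintype.linearCombination R (fun i => vecCons (a i) (u i)) c =
      vecCons (Fintype.linearCombination R a c) (Fintype.linearCombination R u c) := by
  ext j
  refine Fin.cases ?_ (fun j => ?_) j <;> simp [Fintype.linearCombination_apply, Finset.sum_apply]

/-! Elimination of the first coordinate of the vectors `v i = vecCons (a i) (u i)`: those with
`a i = 0` are kept, and each pair `p, q` with `a p > 0 > a q` is replaced by the combination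
`a p • v q - a q • v p`, whose first coordinate vanishes; `elim` records the other coordinates. -/
namespace FourierMotzkin

variable {F ι : Type*} [Field F] [LinearOrder F] (a : ι → F)

abbrev Index : Type _ := {i // a i = 0} ⊕ {i // 0 < a i} × {i // a i < 0}

variable {k : ℕ} (u : ι → Fin k → F)

def elim : Index a → Fin k → F
  | .inl i => u i
  | .inr (p, q) => a p • u q - a q • u p

theorem exists_forall_dotProduct_pos_of_elim [IsStrictOrderedRing F] [Fintype ι] (y : Fin k → F)
    (hy : ∀ x, 0 < elim a u x ⬝ᵥ y) : ∃ t, ∀ i, 0 < vecCons (a i) (u i) ⬝ᵥ vecCons t y := by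
  simp only [cons_dotProduct_cons]
  refine exists_forall_mul_add_pos a _ (fun i hi => hy (.inl ⟨i, hi⟩)) fun p q hp hq => ?_
  simpa [elim, sub_dotProduct, smul_dotProduct] using hy (.inr (⟨p, hp⟩, ⟨q, hq⟩))

variable [DecidableEq ι]

/-- The coefficients expressing `vecCons 0 (elim a u x)` in terms of the original vectors. -/
def coeff : Index a → ι → F
  | .inl i => Pi.single i.1 1
  | .inr (p, q) => Pi.single p.1 (-a q) + Pi.single q.1 (a p)

theorem linearCombination_coeff [Fintype ι] : ∀ x, Fintype.linearCombination F a (coeff a x) = 0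
  | .inl i => by simp [coeff, i.2]
  | .inr (p, q) => by simp [coeff]; ring

theorem linearCombination_coeff_eq_elim [Fintype ι] :
    ∀ x, Fintype.linearCombination F u (coeff a x) = elim a u x
  | .inl i => by simp [coeff, elim]
  | .inr (p, q) => by simp [coeff, elim]; module

variable [IsStrictOrderedRing F]

theorem coeff_nonneg : ∀ x, 0 ≤ coeff a x
  | .inl _ => Pi.single_nonneg.2 zero_le_one
  | .inr (p, q) =>
    add_nonneg (Pi.single_nonneg.2 (neg_nonneg.2 q.2.le)) (Pi.single_nonneg.2 p.2.le)

theorem coeff_ne_zero : ∀ x, coeff a x ≠ 0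
  | .inl _ => by simp [coeff]
  | .inr (p, q) => fun h => by
    have hpq : p.1 ≠ q.1 := fun h => (p.2.trans (h ▸ q.2)).false
    have := congrFun h p
    simp [coeff, hpq] at this
    linarith [q.2]

theorem eq_zero_of_linearCombination_elim_eq_zero [Fintype ι]
    (h : ∀ c, 0 ≤ c → Fintype.linearCombination F a c = 0 →
      Fintype.linearCombination F u c = 0 → c = 0)
    (d : Index a → F) (hd : 0 ≤ d) (hd0 : Fintype.linearCombination F (elim a u) d = 0) :
    d = 0 := by
  have hterm_nonneg : ∀ x ∈ univ, 0 ≤ d x • coeff a x := fun x _ =>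
    smul_nonneg (hd x) (coeff_nonneg a x)
  have hsum : ∑ x, d x • coeff a x = 0 := by
    refine h _ (sum_nonneg hterm_nonneg) ?_ ?_
    · simp only [map_sum, map_smul, linearCombination_coeff, smul_zero, sum_const_zero]
    · rw [map_sum, ← hd0, Fintype.linearCombination_apply F (elim a u)]
      simp only [map_smul, linearCombination_coeff_eq_elim]
  ext x
  have := (sum_eq_zero_iff_of_nonneg hterm_nonneg).1 hsum x (mem_univ x)
  exact (smul_eq_zero.1 this).resolve_right (coeff_ne_zero a x)

end FourierMotzkin

section Gordan

variable {F : Type*} [Field F] [LinearOrder F] [IsStrictOrderedRing F]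

theorem exists_forall_dotProduct_pos {k : ℕ} {ι : Type*} [Fintype ι] (v : ι → Fin k → F)
    (h : ∀ c, 0 ≤ c → Fintype.linearCombination F v c = 0 → c = 0) :
    ∃ y, ∀ i, 0 < v i ⬝ᵥ y := by
  classical
  induction k generalizing ι with
  | zero =>
    refine ⟨0, fun i => ?_⟩
    exact absurd (congrFun (h 1 zero_le_one (Subsingleton.elim _ _)) i) one_ne_zero
  | succ k ih =>
    obtain ⟨a, u, rfl⟩ : ∃ a u, v = fun i => vecCons (a i) (u i) :=
      ⟨fun i => v i 0, fun i => vecTail (v i), funext fun i => (cons_head_tail _).symm⟩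
    simp only [Fintype.linearCombination_vecCons, cons_eq_zero_iff, and_imp] at h
    obtain ⟨y, hy⟩ := ih _ (FourierMotzkin.eq_zero_of_linearCombination_elim_eq_zero a u h)
    obtain ⟨t, ht⟩ := FourierMotzkin.exists_forall_dotProduct_pos_of_elim a u y hy
    exact ⟨vecCons t y, ht⟩

theorem Module.exists_dual_forall_pos {V ι : Type*} [AddCommGroup V] [Module F V]
    [FiniteDimensional F V] [Fintype ι] (v : ι → V)
    (h : ∀ c, 0 ≤ c → Fintype.linearCombination F v c = 0 → c = 0) :
    ∃ φ : Module.Dual F V, ∀ i, 0 < φ (v i) := by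
  classical
  let e := (Module.finBasis F V).equivFun
  obtain ⟨y, hy⟩ := exists_forall_dotProduct_pos (fun i => e (v i)) fun c hc hc0 => h c hc <| by
    rw [← e.map_eq_zero_iff, ← hc0]
    simp [Fintype.linearCombination_apply]
  exact ⟨dotProductEquiv F _ y ∘ₗ e.toLinearMap, fun i => by
    simpa [dotProduct_comm] using hy i⟩

end Gordan

theorem exists_pos_nat_forall_mul_eq_natCast {ι : Type*} [Finite ι] (c : ι → ℚ) (hc : 0 ≤ c) :
    ∃ N : ℕ, 0 < N ∧ ∀ i, ∃ n : ℕ, (n : ℚ) = N * c i := by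
  obtain ⟨⟨b, hb⟩, hint⟩ := IsLocalization.exist_integer_multiples_of_finite (nonZeroDivisors ℤ) c
  refine ⟨b.natAbs, Int.natAbs_pos.2 (nonZeroDivisors.coe_ne_zero ⟨b, hb⟩), fun i => ?_⟩
  obtain ⟨z, hz⟩ := hint i
  refine ⟨z.natAbs, ?_⟩
  simp only [zsmul_eq_mul, eq_intCast] at hz
  rw [Nat.cast_natAbs, Nat.cast_natAbs, Int.cast_abs, Int.cast_abs, hz, abs_mul,
    abs_of_nonneg (hc i)]

theorem AddMonoidHom.exists_forall_natCast_eq {M R : Type*} [AddZeroClass M] [AddMonoidWithOne R]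
    [CharZero R] (ψ : M →+ R) (h : ∀ m, ∃ n : ℕ, (n : R) = ψ m) :
    ∃ f : M →+ ℕ, ∀ m, (f m : R) = ψ m := by
  choose f hf using h
  refine ⟨{ toFun := f, map_zero' := ?_, map_add' := fun x y => ?_ }, hf⟩
  · exact Nat.cast_injective (R := R) (by rw [hf, map_zero, Nat.cast_zero])
  · exact Nat.cast_injective (R := R) (by rw [Nat.cast_add, hf, hf, hf, map_add])

theorem AddMonoidHom.exists_forall_natCast_eq_mul {M : Type*} [AddMonoid M] {S : Finset M}
    (hS : AddSubmonoid.closure (S : Set M) = ⊤) (ψ : M →+ ℚ) (hψ : ∀ s ∈ S, 0 ≤ ψ s) :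
    ∃ N : ℕ, 0 < N ∧ ∃ f : M →+ ℕ, ∀ m, (f m : ℚ) = N * ψ m := by
  obtain ⟨N, hN, hgen⟩ := exists_pos_nat_forall_mul_eq_natCast (fun s : S => ψ s) fun s => hψ s s.2
  refine ⟨N, hN, (N • ψ).exists_forall_natCast_eq fun m => ?_⟩
  have hmS : m ∈ AddSubmonoid.closure (S : Set M) := hS ▸ AddSubmonoid.mem_top m
  induction hmS using AddSubmonoid.closure_induction with
  | mem s hs => simpa using hgen ⟨s, hs⟩
  | zero => exact ⟨0, by simp⟩
  | add x y _ _ hx hy =>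
    obtain ⟨a, ha⟩ := hx
    obtain ⟨b, hb⟩ := hy
    exact ⟨a + b, by rw [Nat.cast_add, ha, hb, map_add]⟩

theorem AddMonoidHom.eq_zero_of_map_eq_zero_of_closure_eq_top {M N : Type*} [AddMonoid M]
    [AddCommMonoid N] [Subsingleton (AddUnits N)] (f : M →+ N) {S : Set M}
    (hS : AddSubmonoid.closure S = ⊤) (hf : ∀ s ∈ S, f s = 0 → s = 0) (m : M) (hm : f m = 0) :
    m = 0 := by
  have hmS : m ∈ AddSubmonoid.closure S := hS ▸ AddSubmonoid.mem_top m
  induction hmS using AddSubmonoid.closure_induction with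
  | mem s hs => exact hf s hs hm
  | zero => rfl
  | add x y _ _ hx hy =>
    rw [map_add, add_eq_zero] at hm
    rw [hx hm.1, hy hm.2, add_zero]

theorem exists_nsmul_eq_zero_of_one_tmul_eq_zero {G : Type*} [AddCommGroup G] {x : G}
    (h : (1 : ℚ) ⊗ₜ[ℤ] x = 0) : ∃ n : ℕ, n ≠ 0 ∧ n • x = 0 := by
  obtain ⟨c, hc⟩ := (IsLocalizedModule.eq_zero_iff (nonZeroDivisors ℤ)
    (TensorProduct.mk ℤ ℚ G 1)).1 h
  exact ⟨(c : ℤ).natAbs, Int.natAbs_ne_zero.2 (nonZeroDivisors.coe_ne_zero c),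
    natAbs_nsmul_eq_zero.2 hc⟩

theorem eq_zero_of_nsmul_eq_zero {M : Type*} [AddCommMonoid M] [Subsingleton (AddUnits M)]
    {n : ℕ} (hn : n ≠ 0) {m : M} (h : n • m = 0) : m = 0 := by
  obtain ⟨k, rfl⟩ := Nat.exists_eq_succ_of_ne_zero hn
  exact (add_eq_zero.1 (succ_nsmul' m k ▸ h)).1

section Sharp

variable {M : Type*} [AddCancelCommMonoid M] [Subsingleton (AddUnits M)]

theorem eq_zero_of_linearCombination_one_tmul_of_eq_zero {ι : Type*} [Fintype ι] (g : ι → M)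
    (hg : ∀ i, g i ≠ 0) (c : ι → ℚ) (hc : 0 ≤ c)
    (hc0 : Fintype.linearCombination ℚ
      (fun i => (1 : ℚ) ⊗ₜ[ℤ] Algebra.GrothendieckAddGroup.of (g i)) c = 0) :
    c = 0 := by
  obtain ⟨N, hN, hmul⟩ := exists_pos_nat_forall_mul_eq_natCast c hc
  choose n hn using hmul
  have hsum : (1 : ℚ) ⊗ₜ[ℤ] Algebra.GrothendieckAddGroup.of (∑ i, n i • g i) = 0 := by
    calc _ = (N : ℚ) • Fintype.linearCombination ℚ
          (fun i => (1 : ℚ) ⊗ₜ[ℤ] Algebra.GrothendieckAddGroup.of (g i)) c := by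
          simp [Fintype.linearCombination_apply, tmul_sum, smul_sum, smul_smul, ← hn,
            ← Nat.cast_smul_eq_nsmul ℚ, tmul_smul]
      _ = 0 := by rw [hc0, smul_zero]
  obtain ⟨k, hk, hk0⟩ := exists_nsmul_eq_zero_of_one_tmul_eq_zero hsum
  have hsum0 : ∑ i, n i • g i = 0 :=
    eq_zero_of_nsmul_eq_zero hk (Algebra.GrothendieckAddGroup.of_injective (by simpa using hk0))
  ext i
  have hni : n i = 0 := by
    by_contra hni
    exact hg i (eq_zero_of_nsmul_eq_zero hni (sum_eq_zero_iff.1 hsum0 i (mem_univ i)))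
  have := hn i
  rw [hni, Nat.cast_zero, eq_comm, mul_eq_zero] at this
  exact this.resolve_left (by positivity)

theorem exists_addMonoidHom_rat_forall_pos [AddMonoid.FG M] {ι : Type*} [Fintype ι] (g : ι → M)
    (hg : ∀ i, g i ≠ 0) : ∃ ψ : M →+ ℚ, ∀ i, 0 < ψ (g i) := by
  let e : M →+ ℚ ⊗[ℤ] Algebra.GrothendieckAddGroup M :=
    (TensorProduct.mk ℤ ℚ _ 1).toAddMonoidHom.comp Algebra.GrothendieckAddGroup.of
  obtain ⟨φ, hφ⟩ := Module.exists_dual_forall_pos (fun i => e (g i))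
    (eq_zero_of_linearCombination_one_tmul_of_eq_zero g hg)
  exact ⟨φ.toAddMonoidHom.comp e, hφ⟩

end Sharp

/-- **Lemma 4.7.** Let `M` be a finitely generated, sharp, integral (i.e. cancellative)
commutative monoid. Then there exists a monoid homomorphism `f : M →+ ℕ` with
`f m > 0` for all `m ≠ 0`. -/
theorem MonoidMetrised.exists_strictly_positive_functional (M : Type) [AddCancelCommMonoid M]
    [AddMonoid.FG M] (hsharp : ∀ a b : M, a + b = 0 → a = 0) :
    ∃ f : M →+ ℕ, ∀ m : M, m ≠ 0 → 0 < f m := by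
  classical
  have : Subsingleton (AddUnits M) := Subsingleton.addUnits_of_isAddUnit fun a ha =>
    let ⟨b, hb⟩ := ha.exists_neg
    hsharp a b hb
  obtain ⟨S, hS⟩ := AddMonoid.fg_def.1 ‹AddMonoid.FG M›
  obtain ⟨ψ, hψ⟩ := exists_addMonoidHom_rat_forall_pos
    (fun s : S.filter (· ≠ 0) => (s : M)) fun s => (mem_filter.1 s.2).2
  have hψS : ∀ s ∈ S, s ≠ 0 → 0 < ψ s := fun s hs hs0 => hψ ⟨s, mem_filter.2 ⟨hs, hs0⟩⟩
  obtain ⟨N, hN, f, hf⟩ := ψ.exists_forall_natCast_eq_mul hS fun s hs => by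
    rcases eq_or_ne s 0 with rfl | hs0
    · rw [map_zero]
    · exact (hψS s hs hs0).le
  refine ⟨f, fun m hm => Nat.pos_of_ne_zero fun hfm =>
    hm (f.eq_zero_of_map_eq_zero_of_closure_eq_top hS (fun s hs hfs => ?_) m hfm)⟩
  by_contra hs0
  have := hf s
  rw [hfs, Nat.cast_zero] at this
  exact (mul_pos (Nat.cast_pos.2 hN) (hψS s hs hs0)).ne this
end

section
/- Let φ : Γ → Γ' be a harmonic (horizontally conformal) morphism of connected M-metrised graphs. Then for any two half-edges e', f' of Γ', the multiplicities agree: m_φ(e') = m_φ(f'). In particular the degree deg(φ) = m_φ(e') is well defined, independent of the choice of half-edge e' of Γ'. -/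
noncomputable section
open scoped Classical

/-! ### Groupification of a cancellative additive commutative monoid -/

variable (M : Type) [AddCancelCommMonoid M]

def gpSetoid : Setoid (M × M) where
  r p q := p.1 + q.2 = q.1 + p.2
  iseqv := by
    refine ⟨fun p => rfl, fun h => h.symm, fun {p q r} h1 h2 => ?_⟩
    have key : (p.1 + r.2) + (q.1 + q.2) = (r.1 + p.2) + (q.1 + q.2) := by
      calc (p.1 + r.2) + (q.1 + q.2) = (p.1 + q.2) + (q.1 + r.2) := by abel
        _ = (q.1 + p.2) + (r.1 + q.2) := by rw [h1, h2]
        _ = (r.1 + p.2) + (q.1 + q.2) := by abel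
    exact add_right_cancel key

/-- The groupification `M^gp` of a cancellative commutative monoid `M`:
the quotient of `M × M` by `(a,b) ~ (c,d) ↔ a + d = c + b` (think of `(a,b)` as `a - b`). -/
def Gp : Type := Quotient (gpSetoid M)

namespace Gp

variable {M}

/-- The element `a - b` of `M^gp`. -/
def mk (a b : M) : Gp M := Quotient.mk (gpSetoid M) (a, b)

instance : Zero (Gp M) := ⟨mk 0 0⟩

instance : Add (Gp M) :=
  ⟨Quotient.map₂ (fun p q => (p.1 + q.1, p.2 + q.2)) (by
    intro p p' hp q q' hq
    show (p.1 + q.1) + (p'.2 + q'.2) = (p'.1 + q'.1) + (p.2 + q.2)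
    calc (p.1 + q.1) + (p'.2 + q'.2) = (p.1 + p'.2) + (q.1 + q'.2) := by abel
      _ = (p'.1 + p.2) + (q'.1 + q.2) := by rw [hp, hq]
      _ = (p'.1 + q'.1) + (p.2 + q.2) := by abel)⟩

instance : Neg (Gp M) :=
  ⟨Quotient.map (fun p => (p.2, p.1)) (by
    intro p p' hp
    show p.2 + p'.1 = p'.2 + p.1
    calc p.2 + p'.1 = p'.1 + p.2 := by abel
      _ = p.1 + p'.2 := hp.symm
      _ = p'.2 + p.1 := by abel)⟩

lemma mk_add_mk (a b c d : M) : mk a b + mk c d = mk (a + c) (b + d) := rfl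
lemma neg_mk (a b : M) : -(mk a b) = mk b a := rfl
lemma zero_def : (0 : Gp M) = mk 0 0 := rfl

instance : AddCommGroup (Gp M) where
  add := (· + ·)
  zero := 0
  neg := Neg.neg
  nsmul := nsmulRec
  zsmul := zsmulRec
  add_assoc := by
    intro a b c
    induction a using Quotient.inductionOn with | h a =>
    induction b using Quotient.inductionOn with | h b =>
    induction c using Quotient.inductionOn with | h c =>
    exact Quotient.sound (by
      show ((a.1 + b.1) + c.1) + (a.2 + (b.2 + c.2)) = (a.1 + (b.1 + c.1)) + ((a.2 + b.2) + c.2)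
      abel)
  zero_add := by
    intro a
    induction a using Quotient.inductionOn with | h a =>
    exact Quotient.sound (by
      show (0 + a.1) + a.2 = a.1 + (0 + a.2)
      abel)
  add_zero := by
    intro a
    induction a using Quotient.inductionOn with | h a =>
    exact Quotient.sound (by
      show (a.1 + 0) + a.2 = a.1 + (a.2 + 0)
      abel)
  neg_add_cancel := by
    intro a
    induction a using Quotient.inductionOn with | h a =>
    exact Quotient.sound (by
      show (a.2 + a.1) + 0 = 0 + (a.1 + a.2)
      abel)
  add_comm := by
    intro a b
    induction a using Quotient.inductionOn with | h a =>
    induction b using Quotient.inductionOn with | h b =>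
    exact Quotient.sound (by
      show (a.1 + b.1) + (b.2 + a.2) = (b.1 + a.1) + (a.2 + b.2)
      abel)

/-- The canonical map `M → M^gp`. -/
def of : M →+ Gp M where
  toFun a := mk a 0
  map_zero' := rfl
  map_add' := by
    intro a b
    exact (Quotient.sound (by
      show (a + b) + (0 + 0) = (a + b) + 0
      abel) : mk (a + b) 0 = mk (a + b) (0 + 0))

/-- Functoriality of groupification: a monoid homomorphism `f : M →+ N` induces
`f^gp : M^gp →+ N^gp`. -/
def map {N : Type} [AddCancelCommMonoid N] (f : M →+ N) : Gp M →+ Gp N where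
  toFun := Quotient.map (fun p => (f p.1, f p.2)) (by
    intro p p' hp
    show f p.1 + f p'.2 = f p'.1 + f p.2
    rw [← f.map_add, ← f.map_add, hp])
  map_zero' := by
    show mk (f 0) (f 0) = mk 0 0
    rw [f.map_zero]
  map_add' := by
    intro a b
    induction a using Quotient.inductionOn with | h a =>
    induction b using Quotient.inductionOn with | h b =>
    show mk (f (a.1 + b.1)) (f (a.2 + b.2)) = mk (f a.1 + f b.1) (f a.2 + f b.2)
    rw [f.map_add, f.map_add]

end Gp

/-- Sharpness: the only invertible element of `M` is `0`. -/
def Sharp : Prop := ∀ a b : M, a + b = 0 → a = 0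

/-! ### Monoid-metrised graphs -/

/-- A graph (Definition 2.3 of the paper) together with a metric taking values in the
monoid `M`: `X` is the finite set of vertices and half-edges, `r` sends an element to its
root vertex, `i` is the pairing involution on half-edges, and `l` assigns a length in `M`
to every half-edge (and `0` to every vertex). -/
structure MGraph where
  X : Type
  [finX : Fintype X]
  r : X → X
  i : X → X
  r_idem : ∀ x, r (r x) = r x
  i_invol : ∀ x, i (i x) = x
  fix_iff : ∀ x, i x = x ↔ r x = x
  l : X → M
  l_i : ∀ x, l (i x) = l x
  l_zero_iff : ∀ x, l x = 0 ↔ i x = x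

attribute [instance] MGraph.finX

namespace MGraph

variable {M} (G : MGraph M)

/-- `x` is a vertex iff it is fixed by the involution. -/
def IsVertex (x : G.X) : Prop := G.i x = x

/-- `x` is a half-edge iff it is not fixed by the involution. -/
def IsHalfEdge (x : G.X) : Prop := G.i x ≠ x

/-- The vertex set of `G`. -/
abbrev V : Type := { x : G.X // G.IsVertex x }

/-- The root of any element of `X` is a vertex. -/
def rv (x : G.X) : G.V := ⟨G.r x, (G.fix_iff (G.r x)).mpr (G.r_idem x)⟩

/-- Two vertices are adjacent if some edge joins them. -/
def Adj (u v : G.V) : Prop := ∃ x, G.IsHalfEdge x ∧ G.rv x = u ∧ G.rv (G.i x) = v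

/-- `G` is connected. (All graphs in the paper are assumed connected.) -/
def IsConnected : Prop := Nonempty G.X ∧ ∀ u v : G.V, Relation.ReflTransGen G.Adj u v

/-- The degree of a divisor `D : V → ℤ`. -/
def degD (D : G.V → ℤ) : ℤ := ∑ v, D v

/-- A divisor is effective if all its coefficients are nonnegative. -/
def Effective (D : G.V → ℤ) : Prop := ∀ v, 0 ≤ D v

/-- `g : V → M^gp` is piecewise linear if, along every half-edge, the difference of the
values of `g` at the two endpoints is an integer multiple of the length of that edge. -/
def IsPL (g : G.V → Gp M) : Prop :=
  ∀ x, G.IsHalfEdge x → ∃ n : ℤ, g (G.rv x) - g (G.rv (G.i x)) = n • Gp.of (G.l x)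

/-- The (outgoing) integer slope of `g` along the half-edge `x`. -/
def slope (g : G.V → Gp M) (x : G.X) : ℤ :=
  if h : ∃ n : ℤ, g (G.rv x) - g (G.rv (G.i x)) = n • Gp.of (G.l x) then h.choose else 0

/-- The Laplacian of a piecewise linear function. -/
def lap (g : G.V → Gp M) : G.V → ℤ :=
  fun v => ∑ x : G.X, if G.IsHalfEdge x ∧ G.r x = v.val then G.slope g x else 0

/-- Principal divisors: those of the form `Δ(g)` for a piecewise linear `g`. -/
def IsPrincipal (D : G.V → ℤ) : Prop := ∃ g, G.IsPL g ∧ G.lap g = D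

/-- The rank of a divisor `D`:
`r(D) = max { k : for every effective divisor F of degree k, |D - F| ≠ ∅ }`. -/
def rank (D : G.V → ℤ) : ℤ :=
  sSup {k : ℤ | ∀ F : G.V → ℤ, G.Effective F → G.degD F = k →
    ∃ E : G.V → ℤ, G.Effective E ∧ G.IsPrincipal (D - F - E)}

/-- The divisorial gonality: the minimal degree of a divisor of rank at least 1. -/
def dgon : ℤ := sInf {d : ℤ | ∃ D : G.V → ℤ, 1 ≤ G.rank D ∧ G.degD D = d}

end MGraph


/-! ### Morphisms of monoid-metrised graphs -/

namespace MGraph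

variable {M : Type} [AddCancelCommMonoid M]

/-- A morphism of `M`-metrised graphs (Definition 3.1 of the paper): vertices map to
vertices; a half-edge mapping to a half-edge respects roots and the target length is an
integer multiple of the source length; a half-edge collapsed to a vertex has both of its
endpoints mapped to that vertex. -/
structure Hom (G G' : MGraph M) where
  f : G.X → G'.X
  vtx : ∀ x, G.IsVertex x → G'.IsVertex (f x)
  edge : ∀ x, G.IsHalfEdge x → G'.IsHalfEdge (f x) →
    f (G.r x) = G'.r (f x) ∧ f (G.r (G.i x)) = G'.r (G'.i (f x)) ∧
      ∃ n : ℕ, G'.l (f x) = n • G.l x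
  contr : ∀ x, G.IsHalfEdge x → G'.IsVertex (f x) →
    f (G.r x) = f x ∧ f (G.r (G.i x)) = f x

namespace Hom

variable {G G' : MGraph M} (φ : Hom G G')

/-- The induced map on vertices. -/
def vmap (v : G.V) : G'.V := ⟨φ.f v.val, φ.vtx v.val v.property⟩

/-- The slope `μ_φ(x) = l'(φ(x)) / l(x)` of `φ` along a half-edge `x` (zero if `φ`
collapses `x` to a vertex). -/
def mu (x : G.X) : ℕ :=
  if h : G'.IsHalfEdge (φ.f x) ∧ ∃ n : ℕ, G'.l (φ.f x) = n • G.l x then h.2.choose else 0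

/-- The multiplicity `m_{φ,v}(e') = ∑_{x ∈ H_v, φ(x) = e'} μ_φ(x)` of a half-edge `e'` of
`G'` at a vertex `v` of `G`. -/
def multAt (v : G.V) (e' : G'.X) : ℕ :=
  ∑ x : G.X, if G.IsHalfEdge x ∧ G.r x = v.val ∧ φ.f x = e' then φ.mu x else 0

/-- `φ` is harmonic (= horizontally conformal): for every vertex `v`, all half-edges of
`G'` rooted at `φ(v)` have the same multiplicity at `v`. -/
def Harmonic : Prop :=
  ∀ (v : G.V) (e' f' : G'.X), G'.IsHalfEdge e' → G'.IsHalfEdge f' →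
    G'.r e' = φ.f v.val → G'.r f' = φ.f v.val → φ.multAt v e' = φ.multAt v f'

/-- The horizontal multiplicity `m_φ(v)` of a vertex (the common value of `m_{φ,v}(e')`
over half-edges `e'` rooted at `φ(v)`; zero if there are none). -/
def mV (v : G.V) : ℕ :=
  if h : ∃ e', G'.IsHalfEdge e' ∧ G'.r e' = φ.f v.val then φ.multAt v h.choose else 0

/-- `φ` is non-degenerate if every vertex has positive horizontal multiplicity. -/
def Nondeg : Prop := ∀ v : G.V, 0 < φ.mV v

/-- The multiplicity `m_φ(e') = ∑_{v : φ(v) = r'(e')} m_{φ,v}(e')` of a half-edge of `G'`. -/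
def mE (e' : G'.X) : ℕ :=
  ∑ v : G.V, if φ.f v.val = G'.r e' then φ.multAt v e' else 0

/-- The degree of a harmonic morphism: `deg(φ) = m_φ(e')` for any half-edge `e'` of `G'`. -/
def deg : ℕ := if h : ∃ e', G'.IsHalfEdge e' then φ.mE h.choose else 0

/-- The pullback of divisors: `φ*(D') = ∑_v D'(φ(v)) · m_φ(v) · [v]`. -/
def pullback (D' : G'.V → ℤ) : G.V → ℤ :=
  fun v => D' (φ.vmap v) * (φ.mV v : ℤ)

/-- The pushforward of divisors: `φ_*(D) = ∑_v D(v) · [φ(v)]`. -/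
def pushforward (D : G.V → ℤ) : G'.V → ℤ :=
  fun v' => ∑ v : G.V, if φ.vmap v = v' then D v else 0

end Hom

/-- A cycle in `G`: a cyclic sequence of half-edges `e_0, …, e_k` in which consecutive
half-edges are consecutive (the far endpoint of each is the root of the next) and which
never immediately backtracks. -/
def HasCycle (G : MGraph M) : Prop :=
  ∃ (k : ℕ) (e : ZMod (k + 1) → G.X), (∀ j, G.IsHalfEdge (e j)) ∧
    (∀ j, G.r (G.i (e j)) = G.r (e (j + 1))) ∧ (∀ j, e (j + 1) ≠ G.i (e j))

/-- A tree is a connected graph with no cycles. -/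
def IsTree (G : MGraph M) : Prop := G.IsConnected ∧ ¬ G.HasCycle

/-- The geometric gonality of `G`: the minimal degree of a harmonic, non-degenerate
morphism from `G` onto an `M`-metrised tree, or `∞` if no such morphism exists. -/
def ggon (G : MGraph M) : ℕ∞ :=
  sInf {d : ℕ∞ | ∃ (T : MGraph M) (φ : Hom G T),
    T.IsTree ∧ φ.Harmonic ∧ φ.Nondeg ∧ (φ.deg : ℕ∞) = d}

end MGraph

/-! ### Auxiliary development for well-definedness of the degree -/

section DegreeAux

open Finset

variable {M : Type} [AddCancelCommMonoid M]

lemma sharp_nsmul_eq_zero (hs : Sharp M) {n : ℕ} {a : M} (h : n • a = 0) (ha : a ≠ 0) :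
    n = 0 := by
  cases n with
  | zero => rfl
  | succ k =>
    exfalso
    apply ha
    apply hs a (k • a)
    rw [add_comm, ← succ_nsmul]
    exact h

lemma sharp_nsmul_ne_zero (hs : Sharp M) {n : ℕ} {a : M} (hn : 0 < n) (ha : a ≠ 0) :
    n • a ≠ 0 := fun h => absurd (sharp_nsmul_eq_zero hs h ha) (Nat.pos_iff_ne_zero.mp hn)

lemma sharp_nsmul_cancel (hs : Sharp M) {a : M} (ha : a ≠ 0) {n m : ℕ}
    (h : n • a = m • a) : n = m := by
  have key : ∀ n m : ℕ, n ≤ m → n • a = m • a → n = m := by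
    intro n m hle h
    obtain ⟨d, rfl⟩ := Nat.exists_eq_add_of_le hle
    rw [add_nsmul] at h
    have hd : d • a = 0 := add_left_cancel (h.symm.trans (add_zero (n • a)).symm)
    have := sharp_nsmul_eq_zero hs hd ha
    omega
  rcases le_total n m with hle | hle
  · exact key n m hle h
  · exact (key m n hle h.symm).symm

/-- Commensurability of two monoid elements. -/
def Commen (a b : M) : Prop := ∃ p : ℕ × ℕ, 0 < p.1 ∧ 0 < p.2 ∧ p.1 • a = p.2 • b

lemma Commen.refl (a : M) : Commen a a := ⟨(1, 1), one_pos, one_pos, rfl⟩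

lemma commen_of_rel {a b : M} {n m : ℕ} (hn : 0 < n) (hm : 0 < m) (h : n • a = m • b) :
    Commen a b := ⟨(n, m), hn, hm, h⟩

lemma Commen.trans' {a b c : M} (h1 : Commen a b) (h2 : Commen b c) : Commen a c := by
  obtain ⟨⟨n1, m1⟩, hn1, hm1, e1⟩ := h1
  obtain ⟨⟨n2, m2⟩, hn2, hm2, e2⟩ := h2
  refine ⟨(n2 * n1, m1 * m2), mul_pos hn2 hn1, mul_pos hm1 hm2, ?_⟩
  calc (n2 * n1) • a = n2 • n1 • a := by rw [mul_smul]
    _ = n2 • m1 • b := by rw [e1]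
    _ = (n2 * m1) • b := by rw [mul_smul]
    _ = (m1 * n2) • b := by rw [mul_comm]
    _ = m1 • n2 • b := by rw [mul_smul]
    _ = m1 • m2 • c := by rw [e2]
    _ = (m1 * m2) • c := by rw [mul_smul]

namespace MGraph

variable {G G' : MGraph M}

lemma he_i {x : G.X} (h : G.IsHalfEdge x) : G.IsHalfEdge (G.i x) := by
  intro he
  apply h
  have := congrArg G.i he
  rwa [G.i_invol, G.i_invol] at this

lemma l_ne_zero {x : G.X} (h : G.IsHalfEdge x) : G.l x ≠ 0 :=
  fun h0 => h ((G.l_zero_iff x).mp h0)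

lemma isVertex_of_not_he {x : G.X} (h : ¬ G.IsHalfEdge x) : G.IsVertex x :=
  not_not.mp h

namespace Hom

variable (φ : Hom G G')

lemma mu_spec {x : G.X} (hx : G.IsHalfEdge x) (hfx : G'.IsHalfEdge (φ.f x)) :
    G'.l (φ.f x) = φ.mu x • G.l x := by
  have hex : ∃ n : ℕ, G'.l (φ.f x) = n • G.l x := (φ.edge x hx hfx).2.2
  unfold Hom.mu
  rw [dif_pos (⟨hfx, hex⟩ : _ ∧ _)]
  exact hex.choose_spec

end Hom

end MGraph

end DegreeAux
section DegreeAux2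

open Finset

variable {M : Type} [AddCancelCommMonoid M]

namespace MGraph

variable {G G' : MGraph M}

namespace Hom

variable (φ : Hom G G')

lemma mu_zero {x : G.X} (hfx : ¬ G'.IsHalfEdge (φ.f x)) : φ.mu x = 0 := by
  unfold Hom.mu
  rw [dif_neg]
  exact fun hc => hfx hc.1

/-- The joint count `N(g, h)` of half-edges of `G` mapping to `g` whose partner maps
to `h`, weighted by slopes. -/
def Nm (g h : G'.X) : ℕ :=
  ∑ x : G.X, if G.IsHalfEdge x ∧ φ.f x = g ∧ φ.f (G.i x) = h then φ.mu x else 0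

lemma mE_eq_sum_he {g : G'.X} (hg : G'.IsHalfEdge g) :
    φ.mE g = ∑ x : G.X, if G.IsHalfEdge x ∧ φ.f x = g then φ.mu x else 0 := by
  unfold Hom.mE Hom.multAt
  have step1 : ∀ v : G.V,
      (if φ.f v.val = G'.r g then
          (∑ x : G.X, if G.IsHalfEdge x ∧ G.r x = v.val ∧ φ.f x = g then φ.mu x else 0) else 0)
        = ∑ x : G.X, (if φ.f v.val = G'.r g then
            (if G.IsHalfEdge x ∧ G.r x = v.val ∧ φ.f x = g then φ.mu x else 0) else 0) := by
    intro v
    split_ifs with h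
    · rfl
    · simp
  rw [Finset.sum_congr rfl (fun v _ => step1 v), Finset.sum_comm]
  refine Finset.sum_congr rfl (fun x _ => ?_)
  by_cases hx : G.IsHalfEdge x ∧ φ.f x = g
  · rw [if_pos hx]
    have hroot : φ.f (G.r x) = G'.r g := by
      have h1 := (φ.edge x hx.1 (by rw [hx.2]; exact hg)).1
      rw [h1, hx.2]
    rw [Finset.sum_eq_single (G.rv x)]
    · rw [if_pos (show φ.f (G.rv x).val = G'.r g from hroot)]
      exact if_pos ⟨hx.1, rfl, hx.2⟩
    · intro v _ hv
      split_ifs with h1 h2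
      · exact absurd (Subtype.ext h2.2.1.symm) hv
      · rfl
      · rfl
    · intro habs
      exact absurd (Finset.mem_univ _) habs
  · rw [if_neg hx]
    refine Finset.sum_eq_zero (fun v _ => ?_)
    split_ifs with h1 h2
    · exact absurd ⟨h2.1, h2.2.2⟩ hx
    · rfl
    · rfl

lemma mE_eq_sum_Nm {g : G'.X} (hg : G'.IsHalfEdge g) :
    φ.mE g = ∑ h : G'.X, φ.Nm g h := by
  rw [φ.mE_eq_sum_he hg]
  unfold Nm
  rw [Finset.sum_comm]
  refine Finset.sum_congr rfl (fun x _ => ?_)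
  have hsplit : ∀ h : G'.X,
      (if G.IsHalfEdge x ∧ φ.f x = g ∧ φ.f (G.i x) = h then φ.mu x else 0)
        = if φ.f (G.i x) = h then (if G.IsHalfEdge x ∧ φ.f x = g then φ.mu x else 0) else 0 := by
    intro h
    by_cases h1 : φ.f (G.i x) = h
    · by_cases h2 : G.IsHalfEdge x ∧ φ.f x = g
      · rw [if_pos ⟨h2.1, h2.2, h1⟩, if_pos h1, if_pos h2]
      · rw [if_neg (fun hc => h2 ⟨hc.1, hc.2.1⟩), if_pos h1, if_neg h2]
    · rw [if_neg (fun hc => h1 hc.2.2), if_neg h1]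
  rw [Finset.sum_congr rfl (fun h _ => hsplit h), Finset.sum_ite_eq, if_pos (Finset.mem_univ _)]

lemma image_i_spec {u' w' : G'.X} (hne : u' ≠ w') {g : G'.X} (hg : G'.IsHalfEdge g)
    (hgu : G'.r g = u') (hgw : G'.r (G'.i g) = w') {x : G.X} (hx : G.IsHalfEdge x)
    (hfx : φ.f x = g) :
    G'.IsHalfEdge (φ.f (G.i x)) ∧ G'.r (φ.f (G.i x)) = w' ∧ G'.r (G'.i (φ.f (G.i x))) = u' := by
  have hfg : G'.IsHalfEdge (φ.f x) := by rw [hfx]; exact hg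
  have hedge := φ.edge x hx hfg
  have hru : φ.f (G.r x) = u' := by rw [hedge.1, hfx, hgu]
  have hrw : φ.f (G.r (G.i x)) = w' := by rw [hedge.2.1, hfx, hgw]
  by_cases hh : G'.IsHalfEdge (φ.f (G.i x))
  · have hedge2 := φ.edge (G.i x) (he_i hx) hh
    refine ⟨hh, ?_, ?_⟩
    · rw [← hedge2.1, hrw]
    · have h21 := hedge2.2.1
      rw [G.i_invol] at h21
      rw [← h21, hru]
  · exfalso
    have hc := φ.contr (G.i x) (he_i hx) (isVertex_of_not_he hh)
    have hc2 := hc.2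
    rw [G.i_invol] at hc2
    apply hne
    rw [← hru, ← hrw, hc.1, hc2]

end Hom

end MGraph

end DegreeAux2
section DegreeAux3

open Finset

variable {M : Type} [AddCancelCommMonoid M]

namespace MGraph

variable {G G' : MGraph M}

namespace Hom

variable (φ : Hom G G')

lemma Nm_swap {g h : G'.X} :
    φ.Nm h g = ∑ x : G.X,
      if G.IsHalfEdge x ∧ φ.f x = g ∧ φ.f (G.i x) = h then φ.mu (G.i x) else 0 := by
  unfold Nm
  refine Fintype.sum_equiv ⟨G.i, G.i, G.i_invol, G.i_invol⟩ _ _ (fun x => ?_)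
  simp only [Equiv.coe_fn_mk, G.i_invol]
  refine if_congr ?_ rfl rfl
  constructor
  · rintro ⟨h1, h2, h3⟩
    exact ⟨he_i h1, h3, h2⟩
  · rintro ⟨h1, h2, h3⟩
    refine ⟨?_, h3, h2⟩
    have := he_i h1
    rwa [G.i_invol] at this

lemma Nm_rel (hne : G'.r g ≠ G'.r (G'.i g)) (hg : G'.IsHalfEdge g) (h : G'.X) :
    φ.Nm g h • G'.l h = φ.Nm h g • G'.l g := by
  by_cases hh : G'.IsHalfEdge h
  · conv_rhs => rw [φ.Nm_swap]
    conv_lhs => unfold Nm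
    rw [Finset.sum_smul, Finset.sum_smul]
    refine Finset.sum_congr rfl (fun x _ => ?_)
    split_ifs with hc
    · have h1 : G'.l (φ.f x) = φ.mu x • G.l x := φ.mu_spec hc.1 (by rw [hc.2.1]; exact hg)
      have h2 : G'.l (φ.f (G.i x)) = φ.mu (G.i x) • G.l (G.i x) :=
        φ.mu_spec (he_i hc.1) (by rw [hc.2.2]; exact hh)
      rw [← hc.2.1, ← hc.2.2, h1, h2, G.l_i, smul_smul, smul_smul, mul_comm]
    · rw [zero_smul, zero_smul]
  · have hz1 : φ.Nm g h = 0 := by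
      refine Finset.sum_eq_zero (fun x _ => ?_)
      rw [if_neg]
      rintro ⟨hx, hfx, hfix⟩
      exact hh (by rw [← hfix]; exact (φ.image_i_spec hne hg rfl rfl hx hfx).1)
    have hz2 : φ.Nm h g = 0 := by
      refine Finset.sum_eq_zero (fun x _ => ?_)
      rw [if_neg]
      rintro ⟨hx, hfx, hfix⟩
      have hcontr := φ.contr x hx (isVertex_of_not_he (by rw [hfx]; exact hh))
      have hedge2 := φ.edge (G.i x) (he_i hx) (by rw [hfix]; exact hg)
      apply hne
      have e1 : φ.f (G.r (G.i x)) = G'.r g := by rw [hedge2.1, hfix]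
      have e2 : φ.f (G.r x) = G'.r (G'.i g) := by
        have h21 := hedge2.2.1
        rw [G.i_invol] at h21
        rw [h21, hfix]
      rw [← e1, ← e2, hcontr.1, hcontr.2]
    rw [hz1, hz2, zero_smul, zero_smul]

lemma Nm_witness {g h : G'.X} (hN : φ.Nm g h ≠ 0) :
    ∃ x : G.X, G.IsHalfEdge x ∧ φ.f x = g ∧ φ.f (G.i x) = h := by
  obtain ⟨x, -, hx⟩ := Finset.exists_ne_zero_of_sum_ne_zero hN
  by_cases hc : G.IsHalfEdge x ∧ φ.f x = g ∧ φ.f (G.i x) = h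
  · exact ⟨x, hc⟩
  · rw [if_neg hc] at hx
    exact absurd rfl hx

lemma mE_congr_root (hφ : φ.Harmonic) {e' f' : G'.X} (he : G'.IsHalfEdge e')
    (hf : G'.IsHalfEdge f') (hr : G'.r e' = G'.r f') : φ.mE e' = φ.mE f' := by
  unfold mE
  refine Finset.sum_congr rfl (fun v _ => ?_)
  by_cases hv : φ.f v.val = G'.r e'
  · rw [if_pos hv, if_pos (hv.trans hr)]
    exact hφ v e' f' he hf hv.symm (hv.trans hr).symm
  · rw [if_neg hv, if_neg (fun hc => hv (hc.trans hr.symm))]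

end Hom

end MGraph

end DegreeAux3
section DegreeAux4

open Finset

variable {M : Type} [AddCancelCommMonoid M]

namespace MGraph

variable {G G' : MGraph M}

namespace Hom

variable (φ : Hom G G')

lemma mE_flip (hsharp : Sharp M) (hφ : φ.Harmonic) {e' : G'.X} (he : G'.IsHalfEdge e') :
    φ.mE e' = φ.mE (G'.i e') := by
  have hie : G'.IsHalfEdge (G'.i e') := he_i he
  by_cases hr : G'.r e' = G'.r (G'.i e')
  · exact φ.mE_congr_root hφ he hie hr
  · have hchoice : ∀ c : G'.X, ∃ p : ℕ × ℕ, Commen (G'.l c) (G'.l e') →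
        0 < p.1 ∧ 0 < p.2 ∧ p.1 • G'.l c = p.2 • G'.l e' := by
      intro c
      by_cases hc : Commen (G'.l c) (G'.l e')
      · exact ⟨hc.choose, fun _ => hc.choose_spec⟩
      · exact ⟨(1, 1), fun h => absurd h hc⟩
    choose sel hsel using hchoice
    set Rset : Finset G'.X := Finset.univ.filter (fun c => G'.IsHalfEdge c ∧
      G'.r c = G'.r e' ∧ G'.r (G'.i c) = G'.r (G'.i e') ∧ Commen (G'.l c) (G'.l e'))
      with hRset
    have memR : ∀ c : G'.X, c ∈ Rset ↔ (G'.IsHalfEdge c ∧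
        G'.r c = G'.r e' ∧ G'.r (G'.i c) = G'.r (G'.i e') ∧ Commen (G'.l c) (G'.l e')) := by
      intro c
      rw [hRset]
      simp [Finset.mem_filter]
    set wgt : G'.X → ℕ := fun c => (∏ d ∈ Rset.erase c, (sel d).2) * (sel c).1 with hwgt
    set T : M := (∏ d ∈ Rset, (sel d).2) • G'.l e' with hT
    have hprodpos : 0 < ∏ d ∈ Rset, (sel d).2 :=
      Finset.prod_pos (fun d hd => (hsel d ((memR d).mp hd).2.2.2).2.1)
    have hTne : T ≠ 0 := by
      rw [hT]
      exact sharp_nsmul_ne_zero hsharp hprodpos (l_ne_zero he)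
    have hwT : ∀ c ∈ Rset, wgt c • G'.l c = T := by
      intro c hc
      have hspec := hsel c ((memR c).mp hc).2.2.2
      simp only [hwgt, hT]
      calc ((∏ d ∈ Rset.erase c, (sel d).2) * (sel c).1) • G'.l c
          = (∏ d ∈ Rset.erase c, (sel d).2) • ((sel c).1 • G'.l c) := by rw [mul_smul]
        _ = (∏ d ∈ Rset.erase c, (sel d).2) • ((sel c).2 • G'.l e') := by rw [hspec.2.2]
        _ = ((∏ d ∈ Rset.erase c, (sel d).2) * (sel c).2) • G'.l e' := by rw [mul_smul]
        _ = (∏ d ∈ Rset, (sel d).2) • G'.l e' := by rw [Finset.prod_erase_mul _ _ hc]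
    have hwpos : ∀ c ∈ Rset, 0 < wgt c := by
      intro c hc
      have hspec := hsel c ((memR c).mp hc).2.2.2
      refine mul_pos (Finset.prod_pos (fun d hd => ?_)) hspec.1
      exact (hsel d ((memR d).mp (Finset.mem_of_mem_erase hd)).2.2.2).2.1
    have heR : e' ∈ Rset := (memR e').mpr ⟨he, rfl, rfl, Commen.refl _⟩
    have claimZ : ∀ k ∈ Rset, ∀ c : G'.X, c ∉ Rset → φ.Nm (G'.i k) c = 0 := by
      intro k hk c hc
      by_contra hN
      obtain ⟨hkHE, hku, hkw, hkcm⟩ := (memR k).mp hk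
      have hikHE : G'.IsHalfEdge (G'.i k) := he_i hkHE
      have hik_far : G'.r (G'.i (G'.i k)) = G'.r e' := by rw [G'.i_invol, hku]
      have hne2 : G'.r (G'.i k) ≠ G'.r (G'.i (G'.i k)) := by
        rw [hkw, hik_far]
        exact fun hx => hr hx.symm
      obtain ⟨x, hx, hfx, hfix⟩ := φ.Nm_witness hN
      have hspec := φ.image_i_spec hne2 hikHE rfl rfl hx hfx
      rw [hfix] at hspec
      have hrel := φ.Nm_rel hne2 hikHE c
      have hNcg : φ.Nm c (G'.i k) ≠ 0 := by
        intro hz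
        rw [hz, zero_smul] at hrel
        exact hN (sharp_nsmul_eq_zero hsharp hrel (l_ne_zero hspec.1))
      apply hc
      refine (memR c).mpr ⟨hspec.1, ?_, ?_, ?_⟩
      · rw [hspec.2.1, hik_far]
      · rw [hspec.2.2, hkw]
      · have hcm1 : Commen (G'.l c) (G'.l (G'.i k)) :=
          commen_of_rel (Nat.pos_of_ne_zero hN) (Nat.pos_of_ne_zero hNcg) hrel
        have hcm2 : Commen (G'.l (G'.i k)) (G'.l e') := by
          rw [G'.l_i]
          exact hkcm
        exact hcm1.trans' hcm2
    have claimA : ∀ g ∈ Rset, ∀ h : G'.X,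
        wgt g * φ.Nm g h = (if G'.i h ∈ Rset then wgt (G'.i h) else 0) * φ.Nm h g := by
      intro g hg h
      obtain ⟨hgHE, hgu, hgw, hgcm⟩ := (memR g).mp hg
      have hneg : G'.r g ≠ G'.r (G'.i g) := by
        rw [hgu, hgw]
        exact hr
      have hrel := φ.Nm_rel hneg hgHE h
      by_cases hN : φ.Nm g h = 0
      · have hN2 : φ.Nm h g = 0 := by
          by_contra hz
          rw [hN, zero_smul] at hrel
          exact hz (sharp_nsmul_eq_zero hsharp hrel.symm (l_ne_zero hgHE))
        rw [hN, hN2, mul_zero, mul_zero]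
      · obtain ⟨x, hx, hfx, hfix⟩ := φ.Nm_witness hN
        have hspec := φ.image_i_spec hneg hgHE rfl rfl hx hfx
        rw [hfix] at hspec
        have hN2 : φ.Nm h g ≠ 0 := by
          intro hz
          rw [hz, zero_smul] at hrel
          exact hN (sharp_nsmul_eq_zero hsharp hrel (l_ne_zero hspec.1))
        have hihR : G'.i h ∈ Rset := by
          refine (memR _).mpr ⟨he_i hspec.1, ?_, ?_, ?_⟩
          · rw [hspec.2.2, hgu]
          · rw [G'.i_invol, hspec.2.1, hgw]
          · have hcm1 : Commen (G'.l (G'.i h)) (G'.l h) := by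
              rw [G'.l_i]
              exact Commen.refl _
            have hcm2 : Commen (G'.l h) (G'.l g) :=
              commen_of_rel (Nat.pos_of_ne_zero hN) (Nat.pos_of_ne_zero hN2) hrel
            exact (hcm1.trans' hcm2).trans' hgcm
        rw [if_pos hihR]
        refine sharp_nsmul_cancel hsharp hTne ?_
        calc (wgt g * φ.Nm g h) • T
            = (wgt g * φ.Nm g h) • (wgt (G'.i h) • G'.l (G'.i h)) := by rw [hwT _ hihR]
          _ = ((wgt g * φ.Nm g h) * wgt (G'.i h)) • G'.l (G'.i h) := by rw [smul_smul]
          _ = ((wgt g * wgt (G'.i h)) * φ.Nm g h) • G'.l h := by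
              rw [G'.l_i, mul_right_comm]
          _ = (wgt g * wgt (G'.i h)) • (φ.Nm g h • G'.l h) := by rw [mul_smul]
          _ = (wgt g * wgt (G'.i h)) • (φ.Nm h g • G'.l g) := by rw [hrel]
          _ = ((wgt g * wgt (G'.i h)) * φ.Nm h g) • G'.l g := by rw [smul_smul]
          _ = ((wgt (G'.i h) * φ.Nm h g) * wgt g) • G'.l g := by
              rw [show (wgt g * wgt (G'.i h)) * φ.Nm h g
                  = (wgt (G'.i h) * φ.Nm h g) * wgt g from by ring]
          _ = (wgt (G'.i h) * φ.Nm h g) • (wgt g • G'.l g) := by rw [mul_smul]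
          _ = (wgt (G'.i h) * φ.Nm h g) • T := by rw [hwT _ hg]
    have haR : ∀ c ∈ Rset, φ.mE c = φ.mE e' := by
      intro c hc
      obtain ⟨hcHE, hcu, -, -⟩ := (memR c).mp hc
      exact φ.mE_congr_root hφ hcHE he hcu
    have hbR : ∀ c ∈ Rset, φ.mE (G'.i c) = φ.mE (G'.i e') := by
      intro c hc
      obtain ⟨hcHE, -, hcw, -⟩ := (memR c).mp hc
      exact φ.mE_congr_root hφ (he_i hcHE) hie hcw
    have main : (∑ c ∈ Rset, wgt c) * φ.mE e' = (∑ c ∈ Rset, wgt c) * φ.mE (G'.i e') := by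
      calc (∑ c ∈ Rset, wgt c) * φ.mE e'
          = ∑ c ∈ Rset, wgt c * φ.mE e' := by rw [Finset.sum_mul]
        _ = ∑ c ∈ Rset, ∑ h : G'.X, wgt c * φ.Nm c h := by
            refine Finset.sum_congr rfl (fun c hc => ?_)
            rw [← haR c hc, φ.mE_eq_sum_Nm ((memR c).mp hc).1, Finset.mul_sum]
        _ = ∑ c ∈ Rset, ∑ h : G'.X,
              (if G'.i h ∈ Rset then wgt (G'.i h) else 0) * φ.Nm h c :=
            Finset.sum_congr rfl (fun c hc => Finset.sum_congr rfl (fun h _ => claimA c hc h))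
        _ = ∑ c ∈ Rset, ∑ k : G'.X, (if k ∈ Rset then wgt k else 0) * φ.Nm (G'.i k) c := by
            refine Finset.sum_congr rfl (fun c _ => ?_)
            refine Fintype.sum_equiv ⟨G'.i, G'.i, G'.i_invol, G'.i_invol⟩ _ _ (fun h => ?_)
            simp only [Equiv.coe_fn_mk, G'.i_invol]
        _ = ∑ k : G'.X, (if k ∈ Rset then wgt k else 0) * ∑ c ∈ Rset, φ.Nm (G'.i k) c := by
            rw [Finset.sum_comm]
            exact Finset.sum_congr rfl (fun k _ => by rw [Finset.mul_sum])
        _ = ∑ k ∈ Rset, wgt k * ∑ c ∈ Rset, φ.Nm (G'.i k) c := by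
            simp only [ite_mul, zero_mul]
            rw [Finset.sum_ite_mem, Finset.univ_inter]
        _ = ∑ k ∈ Rset, wgt k * φ.mE (G'.i k) := by
            refine Finset.sum_congr rfl (fun k hk => ?_)
            have hsub : ∑ c ∈ Rset, φ.Nm (G'.i k) c = ∑ c : G'.X, φ.Nm (G'.i k) c :=
              Finset.sum_subset (Finset.subset_univ _) (fun c _ hc => claimZ k hk c hc)
            rw [hsub, ← φ.mE_eq_sum_Nm (he_i ((memR k).mp hk).1)]
        _ = ∑ k ∈ Rset, wgt k * φ.mE (G'.i e') :=
            Finset.sum_congr rfl (fun k hk => by rw [hbR k hk])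
        _ = (∑ c ∈ Rset, wgt c) * φ.mE (G'.i e') := by rw [Finset.sum_mul]
    have hpos : 0 < ∑ c ∈ Rset, wgt c :=
      lt_of_lt_of_le (hwpos e' heR) (Finset.single_le_sum (fun c _ => Nat.zero_le _) heR)
    exact Nat.eq_of_mul_eq_mul_left hpos main

end Hom

end MGraph

end DegreeAux4

/-- For a harmonic (horizontally conformal) morphism `φ : Γ → Γ'` of connected
`M`-metrised graphs, any two half-edges of `Γ'` have the same multiplicity; in particular
the degree `deg(φ) = m_φ(e')` is well defined, independent of the half-edge `e'`. -/
theorem MGraph.Hom.mE_well_defined (M : Type) [AddCancelCommMonoid M] (hsharp : Sharp M)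
    (G G' : MGraph M) (hG : G.IsConnected) (hG' : G'.IsConnected)
    (φ : MGraph.Hom G G') (hφ : φ.Harmonic) :
    (∀ e' f' : G'.X, G'.IsHalfEdge e' → G'.IsHalfEdge f' → φ.mE e' = φ.mE f') ∧
      (∀ e' : G'.X, G'.IsHalfEdge e' → φ.deg = φ.mE e') := by
  have main : ∀ e' f' : G'.X, G'.IsHalfEdge e' → G'.IsHalfEdge f' → φ.mE e' = φ.mE f' := by
    intro e' f' he hf
    unfold MGraph.IsConnected at hG'
    have key : ∀ b : G'.V, Relation.ReflTransGen G'.Adj (G'.rv e') b →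
        ∀ g' : G'.X, G'.IsHalfEdge g' → G'.r g' = b.val → φ.mE e' = φ.mE g' := by
      intro b hb
      induction hb with
      | refl =>
        intro g' hg' hroot
        exact φ.mE_congr_root hφ he hg' hroot.symm
      | tail hab hbc ih =>
        intro g' hg' hroot
        unfold MGraph.Adj at hbc
        obtain ⟨x, hxHE, hxb, hxc⟩ := hbc
        have h1 : φ.mE e' = φ.mE x := ih x hxHE (congrArg Subtype.val hxb)
        have h2 : φ.mE x = φ.mE (G'.i x) := φ.mE_flip hsharp hφ hxHE
        have h3 : φ.mE (G'.i x) = φ.mE g' := by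
          refine φ.mE_congr_root hφ (MGraph.he_i hxHE) hg' ?_
          rw [hroot]
          exact congrArg Subtype.val hxc
        exact (h1.trans h2).trans h3
    exact key (G'.rv f') (hG'.2 _ _) f' hf rfl
  refine ⟨main, fun e' he => ?_⟩
  have hex : ∃ c, G'.IsHalfEdge c := ⟨e', he⟩
  unfold MGraph.Hom.deg
  rw [dif_pos hex]
  exact main hex.choose e' hex.choose_spec he

end
end

section
/- Let Γ be an M-metrised graph, let f : M → N be a homomorphism of sharp integral commutative monoids, let φ : Γ → Γ' be the edge contraction of Γ along f, and let g ∈ PL(Γ). Then f^gp ∘ g descends to a well-defined piecewise linear function on Γ' (it takes equal values at the two endpoints of every contracted edge), and Δ'(f^gp ∘ g) = f_*(Δ(g)), where Δ and Δ' are the Laplacians of Γ and Γ'. -/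
noncomputable section
open scoped Classical

/-! ### Groupification of a cancellative additive commutative monoid -/

variable (M : Type) [AddCancelCommMonoid M]

/-! ### Edge contractions along a monoid homomorphism -/

namespace MGraph

variable {M : Type} [AddCancelCommMonoid M] {N : Type} [AddCancelCommMonoid N]

/-- `c : Γ → Γ'` realises the `N`-metrised graph `Γ'` as the edge contraction of the
`M`-metrised graph `Γ` along the monoid homomorphism `f : M → N`: all edge lengths are
replaced by their images under `f`, and the edges whose length becomes `0` are contracted
(their endpoints being identified). -/
structure IsEdgeContraction (f : M →+ N) (G : MGraph M) (G' : MGraph N)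
    (c : G.X → G'.X) : Prop where
  /-- Every vertex and half-edge of `Γ'` comes from `Γ`. -/
  surj : Function.Surjective c
  /-- `c` commutes with the root maps. -/
  map_r : ∀ x, c (G.r x) = G'.r (c x)
  /-- `c` commutes with the involutions. -/
  map_i : ∀ x, c (G.i x) = G'.i (c x)
  /-- The length of the image of `x` is `f` of the length of `x`. -/
  map_l : ∀ x, G'.l (c x) = f (G.l x)
  /-- `c x` is a vertex exactly when `x` is a vertex or a contracted half-edge. -/
  vertex_iff : ∀ x, G'.IsVertex (c x) ↔ (G.IsVertex x ∨ f (G.l x) = 0)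
  /-- `c` is injective on the non-contracted half-edges. -/
  inj_halfedges : ∀ x y, G'.IsHalfEdge (c x) → c x = c y → x = y
  /-- Two vertices of `Γ` become equal in `Γ'` exactly when they are joined by a chain of
  contracted edges. -/
  vertex_glue : ∀ u v, G.IsVertex u → G.IsVertex v →
    (c u = c v ↔ Relation.ReflTransGen
      (fun a b => ∃ x, G.IsHalfEdge x ∧ f (G.l x) = 0 ∧ G.r x = a ∧ G.r (G.i x) = b) u v)

namespace IsEdgeContraction

variable {f : M →+ N} {G : MGraph M} {G' : MGraph N} {c : G.X → G'.X}

/-- The induced map on vertices. -/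
def cV (hc : IsEdgeContraction f G G' c) : G.V → G'.V :=
  fun v => ⟨c v.val, by
    show G'.i (c v.val) = c v.val
    conv_lhs => rw [← hc.map_i v.val, v.property]⟩

/-- The pushforward of divisors along the edge contraction:
`f_*(D) = ∑_v D(v) · [c(v)]`. -/
def push (hc : IsEdgeContraction f G G' c) (D : G.V → ℤ) : G'.V → ℤ :=
  fun v' => ∑ v : G.V, if hc.cV v = v' then D v else 0

end IsEdgeContraction

end MGraph


/-! ### Auxiliary lemmas for Proposition 4.3 -/

namespace Prop43Aux

variable {M : Type} [AddCancelCommMonoid M]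

lemma of_eq_zero {a : M} (h : Gp.of a = 0) : a = 0 := by
  have h' : a + 0 = 0 + 0 := Quotient.exact h
  simpa using h'

lemma nsmul_eq_zero_sharp (hs : Sharp M) {a : M} {n : ℕ} (h : n • a = 0) (hn : n ≠ 0) :
    a = 0 := by
  obtain ⟨k, rfl⟩ := Nat.exists_eq_succ_of_ne_zero hn
  rw [succ_nsmul] at h
  exact hs a (k • a) (by rw [add_comm] at h; exact h)

lemma zsmul_of_eq_zero (hs : Sharp M) {a : M} {n : ℤ} (h : n • Gp.of a = 0) (ha : a ≠ 0) :
    n = 0 := by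
  rcases n with k | k
  · by_contra hk
    have hk' : k ≠ 0 := by simpa using hk
    have h1 : (k : ℕ) • Gp.of a = 0 := by
      have : (Int.ofNat k) • Gp.of a = (k : ℕ) • Gp.of a := natCast_zsmul _ _
      rw [← this]; exact h
    rw [← map_nsmul] at h1
    exact ha (nsmul_eq_zero_sharp hs (of_eq_zero h1) hk')
  · exfalso
    rw [negSucc_zsmul, neg_eq_zero, ← map_nsmul] at h
    exact ha (nsmul_eq_zero_sharp hs (of_eq_zero h) (Nat.succ_ne_zero k))

lemma zsmul_of_inj (hs : Sharp M) {a : M} (ha : a ≠ 0) {n m : ℤ}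
    (h : n • Gp.of a = m • Gp.of a) : n = m := by
  have := zsmul_of_eq_zero hs (n := n - m) (a := a) (by rw [sub_smul, h, sub_self]) ha
  omega

lemma map_of {N : Type} [AddCancelCommMonoid N] (f : M →+ N) (a : M) :
    Gp.map f (Gp.of a) = Gp.of (f a) := by
  show Gp.mk (f a) (f 0) = Gp.mk (f a) 0
  rw [f.map_zero]

open MGraph in
lemma slope_spec (G : MGraph M) {g : G.V → Gp M} (hg : G.IsPL g) {x : G.X}
    (hx : G.IsHalfEdge x) :
    g (G.rv x) - g (G.rv (G.i x)) = (G.slope g x) • Gp.of (G.l x) := by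
  unfold MGraph.slope
  rw [dif_pos (hg x hx)]
  exact (hg x hx).choose_spec

open MGraph in
lemma slope_eq (hs : Sharp M) (G : MGraph M) {g : G.V → Gp M} (hg : G.IsPL g) {x : G.X}
    (hx : G.IsHalfEdge x) {n : ℤ}
    (h : g (G.rv x) - g (G.rv (G.i x)) = n • Gp.of (G.l x)) : G.slope g x = n := by
  have hl : G.l x ≠ 0 := fun h0 => hx ((G.l_zero_iff x).mp h0)
  exact zsmul_of_inj hs hl ((slope_spec G hg hx).symm.trans h)

open MGraph in
lemma halfedge_i (G : MGraph M) {x : G.X} (hx : G.IsHalfEdge x) : G.IsHalfEdge (G.i x) := by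
  intro h
  rw [G.i_invol x] at h
  exact hx h.symm

open MGraph in
lemma slope_i (hs : Sharp M) (G : MGraph M) {g : G.V → Gp M} (hg : G.IsPL g) {x : G.X}
    (hx : G.IsHalfEdge x) : G.slope g (G.i x) = - G.slope g x := by
  refine slope_eq hs G hg (halfedge_i G hx) ?_
  rw [G.i_invol x, G.l_i x, neg_smul, ← slope_spec G hg hx, neg_sub]

end Prop43Aux

/-- **Proposition 4.3.** Let `Γ` be an `M`-metrised graph, `f : M → N` a homomorphism of
sharp integral monoids, `c : Γ → Γ'` the edge contraction of `Γ` along `f`, and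
`g ∈ PL(Γ)`. Then `f^gp ∘ g` takes equal values at the two endpoints of every contracted
edge, hence descends to a well-defined function on the vertices of `Γ'`; the descended
function is piecewise linear on `Γ'` and satisfies `Δ'(f^gp ∘ g) = f_*(Δ(g))`. -/
theorem MGraph.IsEdgeContraction.descend_PL_and_lap (M N : Type) [AddCancelCommMonoid M]
    [AddCancelCommMonoid N] (hsharpM : Sharp M) (hsharpN : Sharp N)
    (G : MGraph M) (G' : MGraph N) (hconn : G.IsConnected)
    (f : M →+ N) (c : G.X → G'.X) (hc : MGraph.IsEdgeContraction f G G' c)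
    (g : G.V → Gp M) (hg : G.IsPL g) :
    (∀ x : G.X, G.IsHalfEdge x → f (G.l x) = 0 →
        Gp.map f (g (G.rv x)) = Gp.map f (g (G.rv (G.i x)))) ∧
      (∀ g' : G'.V → Gp N, (∀ v : G.V, g' (hc.cV v) = Gp.map f (g v)) →
        G'.IsPL g' ∧ G'.lap g' = hc.push (G.lap g)) := by
  classical
  open Prop43Aux in
  have hrv : ∀ x : G.X, G'.rv (c x) = hc.cV (G.rv x) := fun x =>
    Subtype.ext (hc.map_r x).symm
  have part1 : ∀ x : G.X, G.IsHalfEdge x → f (G.l x) = 0 →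
      Gp.map f (g (G.rv x)) = Gp.map f (g (G.rv (G.i x))) := by
    intro x hx h0
    have hdz : Gp.map f (g (G.rv x)) - Gp.map f (g (G.rv (G.i x))) = 0 := by
      rw [← map_sub, slope_spec G hg hx, map_zsmul, map_of, h0, map_zero, smul_zero]
    exact sub_eq_zero.mp hdz
  refine ⟨part1, ?_⟩
  intro g' hg'
  have hgc : ∀ x : G.X, g' (G'.rv (c x)) = Gp.map f (g (G.rv x)) := fun x => by
    rw [hrv]; exact hg' _
  have hHE : ∀ x : G.X, G'.IsHalfEdge (c x) → G.IsHalfEdge x ∧ f (G.l x) ≠ 0 := by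
    intro x h
    constructor
    · exact fun hv => h ((hc.vertex_iff x).mpr (Or.inl hv))
    · exact fun h0 => h ((hc.vertex_iff x).mpr (Or.inr h0))
  have hHE' : ∀ x : G.X, G.IsHalfEdge x → f (G.l x) ≠ 0 → G'.IsHalfEdge (c x) := by
    intro x hx hf hv
    rcases (hc.vertex_iff x).mp hv with h | h
    · exact hx h
    · exact hf h
  have hdiff : ∀ x : G.X, G.IsHalfEdge x →
      g' (G'.rv (c x)) - g' (G'.rv (G'.i (c x))) = (G.slope g x) • Gp.of (G'.l (c x)) := by
    intro x hx
    rw [← hc.map_i, hgc, hgc, ← map_sub, slope_spec G hg hx, map_zsmul, map_of, hc.map_l]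
  have hPL : G'.IsPL g' := by
    intro x' hx'
    obtain ⟨x, rfl⟩ := hc.surj x'
    exact ⟨G.slope g x, hdiff x (hHE x hx').1⟩
  refine ⟨hPL, ?_⟩
  have hslope' : ∀ x : G.X, G'.IsHalfEdge (c x) → G'.slope g' (c x) = G.slope g x := by
    intro x hx'
    exact slope_eq hsharpN G' hPL hx' (hdiff x (hHE x hx').1)
  funext v'
  -- rewrite the pushforward as a sum over half-edges of `G`
  have step1 : hc.push (G.lap g) v' =
      ∑ x : G.X, if G.IsHalfEdge x ∧ hc.cV (G.rv x) = v' then G.slope g x else 0 := by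
    unfold MGraph.IsEdgeContraction.push MGraph.lap
    rw [show (∑ v : G.V, if hc.cV v = v' then
          (∑ x : G.X, if G.IsHalfEdge x ∧ G.r x = v.val then G.slope g x else 0) else 0)
        = ∑ v : G.V, ∑ x : G.X, if hc.cV v = v' then
            (if G.IsHalfEdge x ∧ G.r x = v.val then G.slope g x else 0) else 0 from
      Finset.sum_congr rfl fun v _ => by split <;> simp]
    rw [Finset.sum_comm]
    refine Finset.sum_congr rfl fun x _ => ?_
    rw [Finset.sum_eq_single_of_mem (G.rv x) (Finset.mem_univ _)]
    · by_cases hx : G.IsHalfEdge x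
      · by_cases hv : hc.cV (G.rv x) = v'
        · rw [if_pos hv, if_pos (show G.IsHalfEdge x ∧ G.r x = (G.rv x).val from ⟨hx, rfl⟩),
            if_pos (show G.IsHalfEdge x ∧ hc.cV (G.rv x) = v' from ⟨hx, hv⟩)]
        · rw [if_neg hv,
            if_neg (show ¬(G.IsHalfEdge x ∧ hc.cV (G.rv x) = v') from fun h => hv h.2)]
      · rw [if_neg (show ¬(G.IsHalfEdge x ∧ hc.cV (G.rv x) = v') from fun h => hx h.1)]
        split
        · exact if_neg (show ¬(G.IsHalfEdge x ∧ G.r x = (G.rv x).val) from fun h => hx h.1)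
        · rfl
    · intro v _ hv
      have : ¬(G.IsHalfEdge x ∧ G.r x = v.val) := fun h => hv (Subtype.ext h.2.symm)
      rw [if_neg this]
      split <;> rfl
  -- split into contracted and non-contracted half-edges
  have step2 : (∑ x : G.X, if G.IsHalfEdge x ∧ hc.cV (G.rv x) = v' then G.slope g x else 0)
      = (∑ x : G.X, if G.IsHalfEdge x ∧ f (G.l x) ≠ 0 ∧ hc.cV (G.rv x) = v'
            then G.slope g x else 0)
        + (∑ x : G.X, if G.IsHalfEdge x ∧ f (G.l x) = 0 ∧ hc.cV (G.rv x) = v'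
            then G.slope g x else 0) := by
    rw [← Finset.sum_add_distrib]
    refine Finset.sum_congr rfl fun x _ => ?_
    by_cases h0 : f (G.l x) = 0 <;> split_ifs <;> simp_all
  -- the contracted half-edges contribute zero
  have step3 : (∑ x : G.X, if G.IsHalfEdge x ∧ f (G.l x) = 0 ∧ hc.cV (G.rv x) = v'
        then G.slope g x else 0) = 0 := by
    set Q : G.X → Prop := fun x => G.IsHalfEdge x ∧ f (G.l x) = 0 ∧ hc.cV (G.rv x) = v'
      with hQdef
    have hQsym : ∀ x : G.X, Q x → Q (G.i x) := by
      rintro x ⟨hx, h0, hv⟩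
      refine ⟨halfedge_i G hx, by rw [G.l_i]; exact h0, ?_⟩
      have hglue : c (G.r (G.i x)) = c (G.r x) := by
        refine ((hc.vertex_glue (G.r (G.i x)) (G.r x)
          ((G.fix_iff _).mpr (G.r_idem _)) ((G.fix_iff _).mpr (G.r_idem _))).mpr ?_)
        refine Relation.ReflTransGen.single ?_
        exact ⟨G.i x, halfedge_i G hx, by rw [G.l_i]; exact h0, rfl, by rw [G.i_invol]⟩
      rw [← hv]
      exact Subtype.ext hglue
    refine Finset.sum_involution (fun x _ => G.i x) ?_ ?_ (fun x _ => Finset.mem_univ _) ?_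
    · intro x _
      by_cases hq : Q x
      · rw [if_pos hq, if_pos (hQsym x hq), slope_i hsharpM G hg hq.1, add_neg_cancel]
      · have hq' : ¬ Q (G.i x) := fun h => hq (by
          have := hQsym _ h
          rwa [G.i_invol] at this)
        rw [if_neg hq, if_neg hq', add_zero]
    · intro x _ hne
      intro hix
      apply hne
      by_cases hq : Q x
      · exact absurd hix hq.1
      · rw [if_neg hq]
    · intro x _
      exact G.i_invol x
  -- the non-contracted half-edges are in bijection with the half-edges of `G'`
  have step4 : G'.lap g' v' =
      ∑ x : G.X, if G.IsHalfEdge x ∧ f (G.l x) ≠ 0 ∧ hc.cV (G.rv x) = v'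
        then G.slope g x else 0 := by
    unfold MGraph.lap
    rw [← Finset.sum_filter, ← Finset.sum_filter]
    refine (Finset.sum_bij (fun (x : G.X) _ => c x) ?_ ?_ ?_ ?_).symm
    · intro x hx
      rw [Finset.mem_filter] at hx ⊢
      obtain ⟨_, hx, hf, hv⟩ := hx
      refine ⟨Finset.mem_univ _, hHE' x hx hf, ?_⟩
      rw [← hc.map_r]
      exact congrArg Subtype.val hv
    · intro a ha b hb hab
      rw [Finset.mem_filter] at ha
      exact hc.inj_halfedges a b (hHE' a ha.2.1 ha.2.2.1) hab
    · intro x' hx'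
      rw [Finset.mem_filter] at hx'
      obtain ⟨_, hx', hr⟩ := hx'
      obtain ⟨x, rfl⟩ := hc.surj x'
      obtain ⟨hx, hf⟩ := hHE x hx'
      refine ⟨x, Finset.mem_filter.mpr ⟨Finset.mem_univ _, hx, hf, ?_⟩, rfl⟩
      exact Subtype.ext (by rw [← hc.map_r] at hr; exact hr)
    · intro x hx
      rw [Finset.mem_filter] at hx
      exact (hslope' x (hHE' x hx.2.1 hx.2.2.1)).symm
  rw [step4, step1, step2, step3, add_zero]


end
end
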